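/- The number of plane trees with n edges whose height (maximum vertex height) equals k is the same as the number of plane trees T with n edges for which the maximum right spanning width over all internal vertices, rsw(T), equals k. -/

import Mathlib

/-- A plane tree: a root together with a linearly ordered list of subtrees. -/
inductive PlaneTree : Type
  | node : List PlaneTree → PlaneTree

namespace PlaneTree

/-- Total number of edges in a forest (list of plane trees), counting the edges from
the virtual roots to their children. -/
def edgesList : List PlaneTree → ℕ
  | [] => 0
  | node cs :: ts => cs.length + edgesList cs + edgesList ts

/-- Number of edges of a plane tree. -/
def edgeCount (t : PlaneTree) : ℕ := edgesList [t]

/-- Multiset of heights of all vertices of a forest whose roots are at height `h`. -/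
def heightsList (h : ℕ) : List PlaneTree → Multiset ℕ
  | [] => 0
  | node cs :: ts => {h} + heightsList (h + 1) cs + heightsList h ts

/-- Multiset of the heights of all vertices of a plane tree (root at height 0). -/
def vertexHeights (t : PlaneTree) : Multiset ℕ := heightsList 0 [t]

/-- Multiset of heights of the leaves (childless vertices) of a forest whose roots are
at height `h`. -/
def leafHeightsList (h : ℕ) : List PlaneTree → Multiset ℕ
  | [] => 0
  | node cs :: ts =>
      (if cs.isEmpty then ({h} : Multiset ℕ) else 0) + leafHeightsList (h + 1) cs + leafHeightsList h ts

/-- Multiset of the heights of the leaves (childless non-root vertices) of a plane tree. -/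
def leafHeights : PlaneTree → Multiset ℕ
  | node cs => leafHeightsList 1 cs

/-- Multiset of outdegrees of the internal vertices (vertices with at least one child)
of a forest. -/
def outdegList : List PlaneTree → Multiset ℕ
  | [] => 0
  | node cs :: ts => (if cs.isEmpty then 0 else ({cs.length} : Multiset ℕ)) + outdegList cs + outdegList ts

/-- Multiset of the outdegrees of the internal vertices of a plane tree. -/
def internalOutdegs (t : PlaneTree) : Multiset ℕ := outdegList [t]

/-- Right spanning widths of all vertices of a forest, where `a` is the number of edges
attached from the right-hand side to the path from the forest's (virtual) root upwards.
A root `node cs` of the forest followed by `ts` has `ts.length` right siblings, so its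
right spanning width is `cs.length + a + ts.length`. -/
def rswList (a : ℕ) : List PlaneTree → Multiset ℕ
  | [] => 0
  | node cs :: ts =>
      {cs.length + a + ts.length} + rswList (a + ts.length) cs + rswList a ts

/-- Multiset of the right spanning widths of all vertices of a plane tree. -/
def vertexRSW : PlaneTree → Multiset ℕ
  | node cs => {cs.length} + rswList 0 cs

/-- Right spanning widths of the internal vertices of a forest (see `rswList`). -/
def rswIntList (a : ℕ) : List PlaneTree → Multiset ℕ
  | [] => 0
  | node cs :: ts =>
      (if cs.isEmpty then 0 else ({cs.length + a + ts.length} : Multiset ℕ)) +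
        rswIntList (a + ts.length) cs + rswIntList a ts

/-- Multiset of the right spanning widths of the internal vertices of a plane tree. -/
def internalRSW : PlaneTree → Multiset ℕ
  | node cs => (if cs.isEmpty then 0 else ({cs.length} : Multiset ℕ)) + rswIntList 0 cs

end PlaneTree

/-!
Write `height f` and `rsw f` for the height and for the largest right spanning width of an
internal vertex of the tree `node f` with children `f`. Splitting off the first tree gives
`height (node cs :: ts) = max (height cs + 1) (height ts)`, while splitting off the last child gives
`rsw (g ++ [node u]) = max (rsw g + 1) (rsw u)`: the new last child adds one right edge to every
vertex of `g`. Hence `F (node cs :: ts) = F cs ++ [node (F ts)]` carries `height` to `rsw`, and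
this `F` is `mirror ∘ swap`, where `swap` exchanges first child and next sibling. Both are
size-preserving involutions, so `node f ↦ node (F f)` is a bijection on trees with `n` edges.
-/

theorem Multiset.max_add_sup_map_add {α : Type*} [LinearOrder α] [OrderBot α] [Add α]
    [AddRightMono α] (m : Multiset α) (c a : α) :
    max (c + a) (m.map (· + a)).sup = max c m.sup + a := by
  induction m using Multiset.induction_on generalizing c with
  | empty => simp
  | cons x m ih =>
    rw [Multiset.map_cons, Multiset.sup_cons, Multiset.sup_cons, ← max_assoc,
      max_add_add_right, ih, max_assoc]

namespace PlaneTree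

theorem heightsList_succ : ∀ (h : ℕ) (f : List PlaneTree),
    heightsList (h + 1) f = (heightsList h f).map (· + 1)
  | _, [] => by simp [heightsList]
  | h, node cs :: ts => by
    simp only [heightsList, heightsList_succ (h + 1) cs, heightsList_succ h ts, Multiset.map_add,
      Multiset.map_singleton]

theorem rswIntList_succ : ∀ (a : ℕ) (f : List PlaneTree),
    rswIntList (a + 1) f = (rswIntList a f).map (· + 1)
  | _, [] => by simp [rswIntList]
  | a, node cs :: ts => by
    rw [rswIntList, rswIntList, add_right_comm a, rswIntList_succ (a + ts.length) cs,
      rswIntList_succ a ts]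
    simp only [Multiset.map_add, apply_ite (Multiset.map _), Multiset.map_singleton,
      Multiset.map_zero]
    congr 4
    omega

theorem rswIntList_append_singleton : ∀ (a : ℕ) (f : List PlaneTree) (t : PlaneTree),
    rswIntList a (f ++ [t]) = rswIntList (a + 1) f + rswIntList a [t]
  | _, [], _ => by simp [rswIntList]
  | a, node cs :: ts, t => by
    have e : a + (ts.length + 1) = a + 1 + ts.length := by omega
    rw [List.cons_append, rswIntList, rswIntList_append_singleton a ts t, rswIntList,
      List.length_append, List.length_singleton]
    simp only [e, add_assoc]

abbrev height (f : List PlaneTree) : ℕ := (heightsList 1 f).sup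

theorem height_cons (cs ts : List PlaneTree) :
    height (node cs :: ts) = max (height cs + 1) (height ts) := by
  have h := Multiset.max_add_sup_map_add (heightsList 1 cs) 0 1
  rw [zero_add] at h
  simp only [height, heightsList, heightsList_succ 1, Multiset.sup_add, Multiset.sup_singleton]
  omega

theorem sup_vertexHeights (f : List PlaneTree) : (vertexHeights (node f)).sup = height f := by
  simp [vertexHeights, heightsList]

abbrev rsw (f : List PlaneTree) : ℕ := (internalRSW (node f)).sup

theorem rsw_eq_max (f : List PlaneTree) : rsw f = max f.length (rswIntList 0 f).sup := by
  cases f <;> simp [rsw, internalRSW, rswIntList]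

theorem rsw_append_singleton (g u : List PlaneTree) :
    rsw (g ++ [node u]) = max (rsw g + 1) (rsw u) := by
  have hu : (rswIntList 0 [node u]).sup = rsw u := by simp [rsw, internalRSW, rswIntList]
  rw [rsw_eq_max, rsw_eq_max, rswIntList_append_singleton, rswIntList_succ, Multiset.sup_add, hu,
    List.length_append, List.length_singleton, ← max_assoc, Multiset.max_add_sup_map_add]

/-- In the first-child/next-sibling encoding of a forest as a binary tree, `swap` exchanges
the left and right subtrees at every node. -/
def swap : List PlaneTree → List PlaneTree
  | [] => []
  | node cs :: ts => node (swap ts) :: swap cs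

def mirror : List PlaneTree → List PlaneTree
  | [] => []
  | node cs :: ts => mirror ts ++ [node (mirror cs)]

theorem swap_involutive : Function.Involutive swap
  | [] => by simp [swap]
  | node cs :: ts => by rw [swap, swap, swap_involutive cs, swap_involutive ts]

theorem mirror_append_singleton : ∀ f u : List PlaneTree,
    mirror (f ++ [node u]) = node (mirror u) :: mirror f
  | [], _ => by simp [mirror]
  | node cs :: ts, u => by rw [List.cons_append, mirror, mirror_append_singleton ts, mirror]; rfl

theorem mirror_involutive : Function.Involutive mirror
  | [] => by simp [mirror]
  | node cs :: ts => by
    rw [mirror, mirror_append_singleton, mirror_involutive cs, mirror_involutive ts]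

theorem rsw_mirror_swap : ∀ f : List PlaneTree, rsw (mirror (swap f)) = height f
  | [] => by simp [rsw, internalRSW, rswIntList, height, heightsList, swap, mirror]
  | node cs :: ts => by
    rw [swap, mirror, rsw_append_singleton, rsw_mirror_swap cs, rsw_mirror_swap ts, height_cons]

theorem edgesList_append : ∀ f g : List PlaneTree, edgesList (f ++ g) = edgesList f + edgesList g
  | [], _ => by simp [edgesList]
  | node cs :: ts, g => by
    rw [List.cons_append, edgesList, edgesList, edgesList_append ts g]; ring

theorem length_add_edgesList_swap : ∀ f : List PlaneTree,
    (swap f).length + edgesList (swap f) = f.length + edgesList f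
  | [] => by simp [swap]
  | node cs :: ts => by
    have := length_add_edgesList_swap cs
    have := length_add_edgesList_swap ts
    simp only [swap, edgesList, List.length_cons]
    omega

theorem length_add_edgesList_mirror : ∀ f : List PlaneTree,
    (mirror f).length + edgesList (mirror f) = f.length + edgesList f
  | [] => by simp [mirror]
  | node cs :: ts => by
    have := length_add_edgesList_mirror cs
    have := length_add_edgesList_mirror ts
    simp only [mirror, edgesList, edgesList_append, List.length_cons, List.length_append,
      List.length_nil]
    omega

theorem edgeCount_node (f : List PlaneTree) : edgeCount (node f) = f.length + edgesList f := by
  simp [edgeCount, edgesList]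

def childrenEquiv : PlaneTree ≃ List PlaneTree where
  toFun | node cs => cs
  invFun := node
  left_inv | node _ => rfl
  right_inv _ := rfl

/-- `node f ↦ node (mirror (swap f))` -/
def heightRSWEquiv : PlaneTree ≃ PlaneTree :=
  childrenEquiv.trans <|
    ((swap_involutive.toPerm _).trans (mirror_involutive.toPerm _)).trans childrenEquiv.symm

theorem edgeCount_heightRSWEquiv (T : PlaneTree) : edgeCount (heightRSWEquiv T) = edgeCount T := by
  obtain ⟨f⟩ := T
  show edgeCount (node (mirror (swap f))) = _
  rw [edgeCount_node, edgeCount_node, length_add_edgesList_mirror, length_add_edgesList_swap]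

theorem sup_internalRSW_heightRSWEquiv (T : PlaneTree) :
    (internalRSW (heightRSWEquiv T)).sup = (vertexHeights T).sup := by
  obtain ⟨f⟩ := T
  exact (rsw_mirror_swap f).trans (sup_vertexHeights f).symm

end PlaneTree

open PlaneTree

/-- The number of plane trees with `n` edges whose height (maximum vertex height) is `k`
equals the number of plane trees `T` with `n` edges with `rsw(T) = k`, where `rsw(T)` is
the maximum right spanning width over the internal vertices of `T`. -/
theorem stmt17 (n k : ℕ) :
    Nat.card {T : PlaneTree // edgeCount T = n ∧ (vertexHeights T).sup = k} =
      Nat.card {T : PlaneTree // edgeCount T = n ∧ (internalRSW T).sup = k} :=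
  Nat.card_congr <| heightRSWEquiv.subtypeEquiv fun T => by
    rw [edgeCount_heightRSWEquiv, sup_internalRSW_heightRSWEquiv]
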